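/- arXiv:2210.16424 — 4 statements merged into one kernel-verified Lean document; each statement's English description precedes it below -/
import Mathlib

section
/- Let X be a finite set of n distinct points in ℝ^d, let C* = {c*_1,…,c*_K} attain φ*_K(X) with nonempty optimal clusters P_1,…,P_K (the fibers of a nearest-point assignment a* : X → C*), and suppose each c*_k equals the mean of the points of P_k. Sample x_1,…,x_K independently, with x_k uniformly distributed on P_k. Then E[Σ_{k=1}^K Σ_{y∈P_k} ‖y − x_k‖²] = 2·φ*_K(X). -/
/-!
The summand for cluster `k` depends only on the coordinate `x_k`, which is uniform on `P_k`,
so the expectation splits into `K` one-cluster averages. For a finite set `s` with centroid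
`c`, expanding `‖y - x‖² = ‖y - c‖² - 2⟪y - c, x - c⟫ + ‖x - c‖²` and using `∑ (y - c) = 0`
gives `∑ₓ ∑ᵧ ‖y - x‖² = 2 |s| ∑ᵧ ‖y - c‖²`. Averaging over `x` and summing over the clusters
yields twice the cost of `C*`, which is `φ*_K(X)`.
-/


open scoped BigOperators Classical

noncomputable section

abbrev Pt (d : ℕ) := EuclideanSpace ℝ (Fin d)

variable {d : ℕ}

/-- Distance from a point to a finite set of centroids (`0` if the set is empty). -/
def dSet (x : Pt d) (C : Finset (Pt d)) : ℝ :=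
  if h : C.Nonempty then C.inf' h fun c => dist x c else 0

/-- `K`-means cost of a multiset of points w.r.t. a finite centroid set. -/
def kcost (X : Multiset (Pt d)) (C : Finset (Pt d)) : ℝ :=
  (X.map fun x => dSet x C ^ 2).sum

/-- Optimal `K`-means objective. -/
def optCost (K : ℕ) (X : Multiset (Pt d)) : ℝ :=
  sInf {v | ∃ C : Finset (Pt d), C.Nonempty ∧ C.card ≤ K ∧ v = kcost X C}

/-- Set of entries of the tuple `c` with index `< j`. -/
def prefSet {K : ℕ} (c : Fin K → Pt d) (j : Fin K) : Finset (Pt d) :=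
  (Finset.univ.filter fun i => i < j).image c

/-- Probability of picking `c j` as the `j`-th centroid in K-means++ initialization on `X`,
given that the previous centroids are the entries of `c` with index `< j`. -/
def stepProb (X : Multiset (Pt d)) {K : ℕ} (c : Fin K → Pt d) (j : Fin K) : ℝ :=
  if (j : ℕ) = 0 then (X.count (c j) : ℝ) / (Multiset.card X : ℝ)
  else (X.count (c j) : ℝ) * dSet (c j) (prefSet c j) ^ 2 / kcost X (prefSet c j)

/-- PMF of K-means++ initialization with parameter `K` on the multiset `X`,
as a function on `K`-tuples of points. -/
def kmppProb (X : Multiset (Pt d)) {K : ℕ} (c : Fin K → Pt d) : ℝ :=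
  ∏ j : Fin K, stepProb X c j

/-- Tuples with all entries in the finite set `X`. -/
def tupleSupp (X : Finset (Pt d)) (K : ℕ) : Finset (Fin K → Pt d) :=
  Fintype.piFinset fun _ => X

/-- The nearest centroid among the entries of `c` to `x`, ties broken by smallest index
(junk value `x` when `K = 0`). -/
def assignPt {K : ℕ} (c : Fin K → Pt d) (x : Pt d) : Pt d :=
  if h : (Finset.univ.filter fun j : Fin K => ∀ i, dist x (c j) ≤ dist x (c i)).Nonempty
  then c ((Finset.univ.filter fun j : Fin K => ∀ i, dist x (c j) ≤ dist x (c i)).min' h)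
  else x

open Finset RealInnerProductSpace

section MeanSquaredDistance

variable {E : Type*} [NormedAddCommGroup E] [InnerProductSpace ℝ E]

theorem sum_sum_dist_sq_eq (s : Finset E) (c : E) :
    ∑ x ∈ s, ∑ y ∈ s, dist y x ^ 2
      = 2 * #s * ∑ y ∈ s, dist y c ^ 2 - 2 * ‖∑ y ∈ s, (y - c)‖ ^ 2 := by
  calc ∑ x ∈ s, ∑ y ∈ s, dist y x ^ 2
      = ∑ x ∈ s, ∑ y ∈ s, (‖y - c‖ ^ 2 - 2 * ⟪y - c, x - c⟫ + ‖x - c‖ ^ 2) := by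
        refine sum_congr rfl fun x _ => sum_congr rfl fun y _ => ?_
        rw [dist_eq_norm, ← norm_sub_sq_real, sub_sub_sub_cancel_right]
    _ = 2 * #s * ∑ y ∈ s, dist y c ^ 2 - 2 * ‖∑ y ∈ s, (y - c)‖ ^ 2 := by
        simp only [sum_add_distrib, sum_sub_distrib, sum_const, nsmul_eq_mul, ← mul_sum,
          ← sum_inner, ← inner_sum, real_inner_self_eq_norm_sq, dist_eq_norm]
        ring

theorem sum_sub_centroid_eq_zero (s : Finset E) :
    ∑ y ∈ s, (y - (#s : ℝ)⁻¹ • ∑ z ∈ s, z) = 0 := by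
  rcases s.eq_empty_or_nonempty with rfl | hs
  · simp
  · have : (#s : ℝ) ≠ 0 := by exact_mod_cast hs.card_pos.ne'
    rw [sum_sub_distrib, sum_const, ← Nat.cast_smul_eq_nsmul ℝ, smul_smul,
      mul_inv_cancel₀ this, one_smul, sub_self]

theorem sum_sum_dist_sq_eq_two_card_mul_sum_dist_sq_centroid (s : Finset E) :
    ∑ x ∈ s, ∑ y ∈ s, dist y x ^ 2
      = 2 * #s * ∑ y ∈ s, dist y ((#s : ℝ)⁻¹ • ∑ z ∈ s, z) ^ 2 := by
  rw [sum_sum_dist_sq_eq s, sum_sub_centroid_eq_zero, norm_zero]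
  ring

end MeanSquaredDistance

theorem Fintype.sum_piFinset_apply_eq {ι κ M : Type*} [Fintype ι] [DecidableEq ι]
    [DecidableEq κ] [AddCommMonoid M] (s : ι → Finset κ) (i : ι) (f : κ → M) :
    ∑ g ∈ Fintype.piFinset s, f (g i) = (∏ j ∈ univ.erase i, #(s j)) • ∑ b ∈ s i, f b := by
  rw [← sum_fiberwise_of_maps_to (g := fun g => g i) fun g hg => Fintype.mem_piFinset.mp hg i,
    smul_sum]
  refine Finset.sum_congr rfl fun b hb => ?_
  rw [Finset.sum_congr rfl fun g hg => congrArg f (mem_filter.mp hg).2, sum_const,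
    Fintype.card_filter_piFinset_eq_of_mem s i hb]

theorem prod_inv_card_mul_sum_piFinset_apply {ι κ 𝕜 : Type*} [Fintype ι] [DecidableEq ι]
    [DecidableEq κ] [Semifield 𝕜] [CharZero 𝕜] (s : ι → Finset κ) (hs : ∀ j, (s j).Nonempty)
    (i : ι) (f : κ → 𝕜) :
    (∏ j, (#(s j) : 𝕜)⁻¹) * ∑ g ∈ Fintype.piFinset s, f (g i)
      = (#(s i) : 𝕜)⁻¹ * ∑ b ∈ s i, f b := by
  have hcard : ∀ j, (#(s j) : 𝕜) ≠ 0 := fun j => by exact_mod_cast (hs j).card_pos.ne'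
  rw [Fintype.sum_piFinset_apply_eq, nsmul_eq_mul, ← mul_prod_erase univ _ (mem_univ i),
    mul_assoc, ← mul_assoc (∏ j ∈ univ.erase i, _), Nat.cast_prod, ← prod_mul_distrib,
    prod_eq_one fun j _ => inv_mul_cancel₀ (hcard j), one_mul]

theorem kcost_image_eq_sum_fiber {d K : ℕ} (X : Finset (Pt d)) (cstar : Fin K → Pt d)
    (hinj : Function.Injective cstar) (astar : Pt d → Pt d)
    (hastar : ∀ x ∈ X, (∃ k, astar x = cstar k) ∧
      dist x (astar x) = dSet x (univ.image cstar)) :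
    kcost X.val (univ.image cstar)
      = ∑ k, ∑ y ∈ X with astar y = cstar k, dist y (cstar k) ^ 2 := by
  have hmaps : ∀ x ∈ X, astar x ∈ univ.image cstar := fun x hx => by
    obtain ⟨k, hk⟩ := (hastar x hx).1
    exact hk ▸ mem_image_of_mem cstar (mem_univ k)
  change ∑ x ∈ X, dSet x (univ.image cstar) ^ 2 = _
  rw [← sum_fiberwise_of_maps_to hmaps, sum_image fun k _ l _ h => hinj h]
  refine sum_congr rfl fun k _ => sum_congr rfl fun y hy => ?_
  obtain ⟨hyX, hyk⟩ := mem_filter.mp hy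
  rw [← (hastar y hyX).2, hyk]

theorem uniform_seeding_per_optimal_cluster_general {d K : ℕ}
    (X : Finset (Pt d))
    (cstar : Fin K → Pt d) (hinj : Function.Injective cstar)
    (hopt : kcost X.val (Finset.univ.image cstar) = optCost K X.val)
    (astar : Pt d → Pt d)
    (hastar : ∀ x ∈ X, (∃ k, astar x = cstar k) ∧
      dist x (astar x) = dSet x (Finset.univ.image cstar))
    (P : Fin K → Finset (Pt d))
    (hP : ∀ k, P k = X.filter fun y => astar y = cstar k)
    (hPne : ∀ k, (P k).Nonempty)
    (hmean : ∀ k, cstar k = (((P k).card : ℝ))⁻¹ • ∑ y ∈ P k, y) :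
    ∑ xs ∈ Fintype.piFinset (fun k => P k),
        (∏ k : Fin K, (1 : ℝ) / (P k).card) * ∑ k : Fin K, ∑ y ∈ P k, dist y (xs k) ^ 2
      = 2 * optCost K X.val := by
  have hcluster : ∀ k, (∏ j, (1 : ℝ) / #(P j)) * ∑ xs ∈ Fintype.piFinset P, ∑ y ∈ P k,
      dist y (xs k) ^ 2 = 2 * ∑ y ∈ P k, dist y (cstar k) ^ 2 := fun k => by
    have hcard : (#(P k) : ℝ) ≠ 0 := by exact_mod_cast (hPne k).card_pos.ne'
    simp only [one_div]
    rw [prod_inv_card_mul_sum_piFinset_apply P hPne k fun x => ∑ y ∈ P k, dist y x ^ 2,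
      sum_sum_dist_sq_eq_two_card_mul_sum_dist_sq_centroid, ← hmean]
    field_simp
  simp only [← hopt, kcost_image_eq_sum_fiber X cstar hinj astar hastar, ← hP]
  rw [← mul_sum, sum_comm, mul_sum, mul_sum]
  exact sum_congr rfl fun k _ => hcluster k

/-- If `C* = {c*_1, …, c*_K}` attains `φ*_K(X)` with nonempty optimal
clusters `P_1, …, P_K` (fibers of a nearest-point assignment `a*`), each `c*_k` being the
mean of `P_k`, and `x_1, …, x_K` are sampled independently with `x_k` uniform on `P_k`,
then `E[Σ_k Σ_{y ∈ P_k} ‖y − x_k‖²] = 2 φ*_K(X)`. -/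
theorem uniform_seeding_per_optimal_cluster {d K : ℕ} (hK : 1 ≤ K)
    (X : Finset (Pt d))
    (cstar : Fin K → Pt d) (hinj : Function.Injective cstar)
    (hopt : kcost X.val (Finset.univ.image cstar) = optCost K X.val)
    (astar : Pt d → Pt d)
    (hastar : ∀ x ∈ X, (∃ k, astar x = cstar k) ∧
      dist x (astar x) = dSet x (Finset.univ.image cstar))
    (P : Fin K → Finset (Pt d))
    (hP : ∀ k, P k = X.filter fun y => astar y = cstar k)
    (hPne : ∀ k, (P k).Nonempty)
    (hmean : ∀ k, cstar k = (((P k).card : ℝ))⁻¹ • ∑ y ∈ P k, y) :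
    ∑ xs ∈ Fintype.piFinset (fun k => P k),
        (∏ k : Fin K, (1 : ℝ) / (P k).card) * ∑ k : Fin K, ∑ y ∈ P k, dist y (xs k) ^ 2
      = 2 * optCost K X.val :=
  uniform_seeding_per_optimal_cluster_general X cstar hinj hopt astar hastar P hP hPne hmean
end
end

section
/- Exact unlearning (Lemma 1, part 1): the unlearned model produced by Algorithm 3 has exactly the distribution of K-means++ initialization with parameter K on X' = X ∖ X_R; that is, as PMFs on K-tuples of points, P(U(A(X), X, X_R) = C) = P(A(X') = C) for every K-tuple C, where A denotes K-means++ initialization with parameter K and U denotes the unlearning procedure of Algorithm 3. -/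
open scoped BigOperators Classical

noncomputable section

variable {d : ℕ}

/-- Transition probability of Algorithm 3 (unlearning for K-means++ initialization):
given the trained tuple `C` on the original set, `unlearnProb X' XR C C'` is the
probability that the procedure outputs `C'`, where `X'` is the retained set and `XR` the
removal set.  If no entry of `C` lies in `XR` the output is `C` itself; otherwise the
prefix of `C` before the first entry in `XR` is kept and the remaining centroids are
resampled by continuing K-means++ sampling on `X'`. -/
def unlearnProb (X' XR : Finset (Pt d)) {K : ℕ} (C C' : Fin K → Pt d) : ℝ :=
  if h : (Finset.univ.filter fun j : Fin K => C j ∈ XR).Nonempty then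
    if ∀ j < (Finset.univ.filter fun j : Fin K => C j ∈ XR).min' h, C' j = C j then
      ∏ j ∈ Finset.univ.filter
          (fun j : Fin K => (Finset.univ.filter fun j' : Fin K => C j' ∈ XR).min' h ≤ j),
        stepProb X'.val C' j
    else 0
  else if C' = C then 1 else 0

/-!
Induct on `K`, splitting off the last centroid. Fix the first `K` trained centroids `C` and the
first `K` output centroids `C'`. If `C` already meets `X_R`, the last output centroid is resampled
from `X'` whatever the last trained centroid was. Otherwise `C' = C`, and the last output
centroid is the trained one when that lands in `X'` and is redrawn from `X'` when it lands in
`X_R`: this is rejection sampling from the D² weights on `X` to those on `X'`, so it reproduces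
the last K-means++ step on `X'`. In both cases appending a centroid multiplies the transition
probability by that step, which closes the induction.
-/

open Finset

section NormalizedWeights

variable {α : Type*} [DecidableEq α]

def normWeight (A : Finset α) (w : α → ℝ) (x : α) : ℝ :=
  if x ∈ A then w x / ∑ a ∈ A, w a else 0

theorem normWeight_of_mem {A : Finset α} {x : α} (w : α → ℝ) (hx : x ∈ A) :
    normWeight A w x = w x / ∑ a ∈ A, w a :=
  if_pos hx

theorem sum_normWeight {A : Finset α} {w : α → ℝ} (hA : ∑ a ∈ A, w a ≠ 0) :
    ∑ x ∈ A, normWeight A w x = 1 := by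
  rw [sum_congr rfl fun x hx => normWeight_of_mem w hx, ← sum_div, div_self hA]

/-- Rejection sampling: draw from `A` with weights `w` and, upon landing in `R`, redraw from
`A \ R`; the result is distributed according to the weights restricted to `A \ R`. -/
theorem normWeight_sdiff_of_rejection {A R : Finset α} {w : α → ℝ}
    (hA : ∑ a ∈ A, w a ≠ 0) (hAR : ∑ a ∈ A \ R, w a ≠ 0) {y : α} (hy : y ∈ A \ R) :
    (∑ x ∈ A ∩ R, normWeight A w x) * normWeight (A \ R) w y + normWeight A w y
      = normWeight (A \ R) w y := by
  rw [sum_congr rfl fun x hx => normWeight_of_mem w (mem_inter.1 hx).1, ← sum_div,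
    normWeight_of_mem w hy, normWeight_of_mem w (mem_sdiff.1 hy).1,
    ← sum_inter_add_sum_sdiff A R w] at *
  field_simp

end NormalizedWeights

section KMeansPlusPlus

variable {K : ℕ}

def d2Weight (S : Finset (Pt d)) (x : Pt d) : ℝ :=
  if S = ∅ then 1 else dSet x S ^ 2

theorem dSet_pos {x : Pt d} {S : Finset (Pt d)} (hS : S.Nonempty) (hx : x ∉ S) :
    0 < dSet x S := by
  rw [dSet, dif_pos hS, lt_inf'_iff]
  exact fun c hc => dist_pos.2 fun h => hx (h ▸ hc)

theorem sum_d2Weight_pos {S Y : Finset (Pt d)} (h : S.card < Y.card) :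
    0 < ∑ y ∈ Y, d2Weight S y := by
  obtain ⟨y, hyY, hyS⟩ := exists_mem_notMem_of_card_lt_card h
  by_cases hS : S = ∅
  · simpa [d2Weight, hS] using card_pos.2 ⟨y, hyY⟩
  · refine sum_pos' (fun x _ => ?_) ⟨y, hyY, ?_⟩
    · rw [d2Weight, if_neg hS]; positivity
    · rw [d2Weight, if_neg hS]
      exact pow_pos (dSet_pos (nonempty_iff_ne_empty.2 hS) hyS) 2

theorem prefSet_eq_empty_iff (c : Fin K → Pt d) (j : Fin K) :
    prefSet c j = ∅ ↔ (j : ℕ) = 0 := by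
  rw [prefSet, image_eq_empty, filter_eq_empty_iff]
  refine ⟨fun h => ?_, fun hj i _ hi => Nat.not_lt_zero i (hj ▸ hi)⟩
  by_contra hj
  exact h (mem_univ ⟨0, j.pos⟩) (Fin.lt_def.2 (Nat.pos_of_ne_zero hj))

theorem stepProb_eq_normWeight (Y : Finset (Pt d)) (c : Fin K → Pt d) (j : Fin K) :
    stepProb Y.val c j = normWeight Y (d2Weight (prefSet c j)) (c j) := by
  have hcount : (Y.val.count (c j) : ℝ) = if c j ∈ Y then 1 else 0 := by
    rw [Multiset.count_eq_of_nodup Y.nodup]; split_ifs <;> simp_all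
  unfold stepProb normWeight d2Weight
  by_cases hj : (j : ℕ) = 0
  · have hS := (prefSet_eq_empty_iff c j).2 hj
    simp only [hj, hS, hcount, ite_true, sum_const, card_val, nsmul_eq_mul, mul_one]
    split_ifs <;> simp
  · have hS : prefSet c j ≠ ∅ := mt (prefSet_eq_empty_iff c j).1 hj
    simp only [hj, hS, hcount, ite_false]
    split_ifs <;> simp [kcost]

end KMeansPlusPlus

section Snoc

variable {K : ℕ}

theorem prefSet_snoc_castSucc (c : Fin K → Pt d) (x : Pt d) (j : Fin K) :
    prefSet (Fin.snoc c x : Fin (K + 1) → Pt d) j.castSucc = prefSet c j := by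
  ext p
  simp [prefSet, Fin.exists_fin_succ', (Fin.castSucc_lt_last j).not_gt]

theorem prefSet_snoc_last (c : Fin K → Pt d) (x : Pt d) :
    prefSet (Fin.snoc c x : Fin (K + 1) → Pt d) (Fin.last K) = univ.image c := by
  ext p
  simp [prefSet, Fin.exists_fin_succ', Fin.castSucc_lt_last]

theorem stepProb_snoc_castSucc (X : Multiset (Pt d)) (c : Fin K → Pt d) (x : Pt d) (j : Fin K) :
    stepProb X (Fin.snoc c x : Fin (K + 1) → Pt d) j.castSucc = stepProb X c j := by
  simp only [stepProb, prefSet_snoc_castSucc, Fin.val_castSucc, Fin.snoc_castSucc]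

theorem stepProb_snoc_last (Y : Finset (Pt d)) (c : Fin K → Pt d) (x : Pt d) :
    stepProb Y.val (Fin.snoc c x : Fin (K + 1) → Pt d) (Fin.last K)
      = normWeight Y (d2Weight (univ.image c)) x := by
  rw [stepProb_eq_normWeight, prefSet_snoc_last, Fin.snoc_last]

theorem kmppProb_snoc (X : Multiset (Pt d)) (c : Fin K → Pt d) (x : Pt d) :
    kmppProb X (Fin.snoc c x : Fin (K + 1) → Pt d)
      = kmppProb X c * stepProb X (Fin.snoc c x : Fin (K + 1) → Pt d) (Fin.last K) := by
  simp only [kmppProb, Fin.prod_univ_castSucc, stepProb_snoc_castSucc]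

theorem sum_tupleSupp_succ (X : Finset (Pt d)) (f : (Fin (K + 1) → Pt d) → ℝ) :
    ∑ C ∈ tupleSupp X (K + 1), f C
      = ∑ c ∈ tupleSupp X K, ∑ x ∈ X, f (Fin.snoc c x) := by
  have h := filter_piFinset_eq_map_snocEquiv (fun _ : Fin (K + 1) => X) (fun _ => True)
  simp only [filter_true] at h
  rw [tupleSupp, h, sum_map, sum_product, sum_comm]
  rfl

end Snoc

section Unlearning

variable {K : ℕ} (X' XR : Finset (Pt d))

theorem unlearnProb_of_forall_notMem {C : Fin K → Pt d} (hC : ∀ j, C j ∉ XR)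
    (C' : Fin K → Pt d) : unlearnProb X' XR C C' = if C' = C then 1 else 0 := by
  rw [unlearnProb, dif_neg]
  simpa [filter_nonempty_iff] using hC

theorem unlearnProb_of_first_mem {C : Fin K → Pt d} {j₀ : Fin K} (hj₀ : C j₀ ∈ XR)
    (hlt : ∀ j < j₀, C j ∉ XR) (C' : Fin K → Pt d) :
    unlearnProb X' XR C C'
      = if ∀ j < j₀, C' j = C j then ∏ j ∈ univ.filter (j₀ ≤ ·), stepProb X'.val C' j
        else 0 := by
  have hmem : j₀ ∈ univ.filter (C · ∈ XR) := mem_filter.2 ⟨mem_univ _, hj₀⟩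
  have hmin : (univ.filter (C · ∈ XR)).min' ⟨j₀, hmem⟩ = j₀ :=
    le_antisymm (min'_le _ _ hmem) <| le_min' _ _ _ fun j hj =>
      not_lt.1 fun hlt' => hlt j hlt' (mem_filter.1 hj).2
  rw [unlearnProb, dif_pos ⟨j₀, hmem⟩]
  simp only [hmin]

theorem unlearnProb_snoc_of_mem {C : Fin K → Pt d} (C' : Fin K → Pt d) {x : Pt d} (y : Pt d)
    (h : (∃ j, C j ∈ XR) ∨ x ∈ XR) :
    unlearnProb X' XR (Fin.snoc C x : Fin (K + 1) → Pt d) (Fin.snoc C' y)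
      = unlearnProb X' XR C C'
        * stepProb X'.val (Fin.snoc C' y : Fin (K + 1) → Pt d) (Fin.last K) := by
  by_cases hC : ∃ j, C j ∈ XR
  · obtain ⟨j₀, hj₀, hmin⟩ := exists_minimal_of_wellFoundedLT (C · ∈ XR) hC
    have hlt : ∀ j < j₀, C j ∉ XR := fun j hj hjR => (hmin hjR hj.le).not_gt hj
    have hlast := Fin.castSucc_lt_last j₀
    rw [unlearnProb_of_first_mem X' XR hj₀ hlt,
      unlearnProb_of_first_mem X' XR (j₀ := j₀.castSucc) (by simpa using hj₀)
        (by simpa [Fin.forall_fin_succ', hlast.not_gt] using hlt)]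
    simp only [prod_filter, Fin.prod_univ_castSucc, Fin.castSucc_le_castSucc_iff, hlast.le,
      ite_true, stepProb_snoc_castSucc]
    simp [Fin.forall_fin_succ', hlast.not_gt, ite_mul]
  · push Not at hC
    rw [unlearnProb_of_forall_notMem X' XR hC,
      unlearnProb_of_first_mem X' XR (j₀ := Fin.last K)
        (by simpa using h.resolve_left (by simpa using hC))
        (by simpa [Fin.forall_fin_succ', Fin.castSucc_lt_last] using hC)]
    simp [Fin.forall_fin_succ', funext_iff, Fin.castSucc_lt_last, Fin.last_le_iff, filter_eq',
      ite_mul]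

theorem unlearnProb_snoc_of_notMem {C : Fin K → Pt d} (C' : Fin K → Pt d) {x : Pt d} (y : Pt d)
    (hC : ∀ j, C j ∉ XR) (hx : x ∉ XR) :
    unlearnProb X' XR (Fin.snoc C x : Fin (K + 1) → Pt d) (Fin.snoc C' y)
      = unlearnProb X' XR C C' * if y = x then 1 else 0 := by
  rw [unlearnProb_of_forall_notMem X' XR hC, unlearnProb_of_forall_notMem X' XR
    (Fin.forall_fin_succ'.2 ⟨by simpa using hC, by simpa using hx⟩)]
  simp only [Fin.snoc_inj, ite_and, ite_mul, one_mul, zero_mul]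

end Unlearning

section Exactness

variable {K : ℕ} {X XR : Finset (Pt d)}

theorem sum_stepProb_mul_unlearnProb_snoc (hcard : K < (X \ XR).card) (C C' : Fin K → Pt d)
    (y : Pt d) :
    ∑ x ∈ X, stepProb X.val (Fin.snoc C x : Fin (K + 1) → Pt d) (Fin.last K)
        * unlearnProb (X \ XR) XR (Fin.snoc C x) (Fin.snoc C' y)
      = unlearnProb (X \ XR) XR C C'
        * stepProb (X \ XR).val (Fin.snoc C' y : Fin (K + 1) → Pt d) (Fin.last K) := by
  have hS : (univ.image C).card < (X \ XR).card :=
    card_image_le.trans_lt (by simpa using hcard)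
  have hW' := (sum_d2Weight_pos hS).ne'
  have hW := (sum_d2Weight_pos (hS.trans_le (card_le_card sdiff_subset))).ne'
  by_cases hC : ∃ j, C j ∈ XR
  · simp_rw [unlearnProb_snoc_of_mem _ XR C' y (Or.inl hC), ← sum_mul, stepProb_snoc_last X,
      sum_normWeight hW, one_mul]
  · push Not at hC
    rw [← sum_inter_add_sum_sdiff X XR,
      sum_congr (s₂ := X ∩ XR) rfl fun x hx => by
        rw [unlearnProb_snoc_of_mem _ XR C' y (Or.inr (mem_inter.1 hx).2)],
      sum_congr (s₂ := X \ XR) rfl fun x hx => by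
        rw [unlearnProb_snoc_of_notMem _ XR C' y hC (mem_sdiff.1 hx).2],
      unlearnProb_of_forall_notMem _ XR hC]
    split_ifs with hCC
    · subst hCC
      simp only [one_mul, ← sum_mul, mul_ite, mul_one, mul_zero, sum_ite_eq, stepProb_snoc_last]
      split_ifs with hy
      · exact normWeight_sdiff_of_rejection hW hW' hy
      · simp [normWeight, hy]
    · simp only [zero_mul, mul_zero, sum_const_zero, add_zero]

end Exactness

theorem unlearning_is_exact_general {d K : ℕ} (X XR : Finset (Pt d))
    (hcard : K ≤ (X \ XR).card) :
    ∀ C' : Fin K → Pt d,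
      ∑ C ∈ tupleSupp X K, kmppProb X.val C * unlearnProb (X \ XR) XR C C'
        = kmppProb (X \ XR).val C' := by
  induction K with
  | zero =>
    intro C'
    simp [tupleSupp, kmppProb, unlearnProb, Subsingleton.elim _ C']
  | succ K ih =>
    intro C'
    rw [← Fin.snoc_init_self C', sum_tupleSupp_succ, kmppProb_snoc,
      ← ih (Nat.le_of_succ_le hcard), sum_mul]
    refine sum_congr rfl fun C _ => ?_
    simp only [kmppProb_snoc, mul_assoc, ← mul_sum]
    rw [sum_stepProb_mul_unlearnProb_snoc hcard]

/-- Lemma 1, part 1: exact unlearning.  The unlearned model produced by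
Algorithm 3 has exactly the distribution of K-means++ initialization with parameter `K`
on `X' = X ∖ X_R`: for every `K`-tuple `C'`,
`P(U(A(X), X, X_R) = C') = P(A(X') = C')`. -/
theorem unlearning_is_exact {d K : ℕ} (X XR : Finset (Pt d))
    (hXR : XR ⊆ X) (hcard : K ≤ (X \ XR).card) :
    ∀ C' : Fin K → Pt d,
      ∑ C ∈ tupleSupp X K, kmppProb X.val C * unlearnProb (X \ XR) XR C C'
        = kmppProb (X \ XR).val C' :=
  unlearning_is_exact_general X XR hcard
end
end

section
/- Adversarial sampling-probability bound: let X be a set of n distinct points in ℝ^d, let K ≥ 1, ε1 > 0 and ε2 ≥ 1, fix C* and a* as in the optimal-clustering setup, and let x ∈ X be a point that is not an ε2-outlier and whose optimal cluster P_x satisfies |P_x| ≥ 2 and |P_x| ≥ n/(K·ε1). Then for every nonempty finite C ⊆ ℝ^d with |C| ≤ K, n·d(x,C)² ≤ 20·K·ε1·ε2·φ(X;C). (Consequently, the D²-sampling probability of x at any step of K-means++ initialization on X is at most 20·K·ε1·ε2/n.) -/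
open scoped BigOperators Classical

noncomputable section

variable {d : ℕ}

/-! The optimal cluster `P` of `x` has centre `a = a*(x)`. Averaging the triangle inequality
`d(a,C) ≤ ‖y - a‖ + d(y,C)` over `y ∈ P` gives `|P|·d(a,C)² ≤ 2·φ(P;{a}) + 2·φ(P;C)`, and both
costs are at most `φ(X;C)`, the first by optimality of `C*`. One more triangle inequality through
`a`, with the non-outlier bound `|P|·‖x - a‖² ≤ ε2·φ(P;{a})`, yields `|P|·d(x,C)² ≤ 10·ε2·φ(X;C)`,
and `n ≤ K·ε1·|P|` finishes. -/

lemma dSet_nonneg (x : Pt d) (C : Finset (Pt d)) : 0 ≤ dSet x C := by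
  unfold dSet
  split_ifs with h
  · exact Finset.le_inf' h _ fun c _ => dist_nonneg
  · exact le_rfl

lemma dSet_le_dist (x : Pt d) {C : Finset (Pt d)} {c : Pt d} (hc : c ∈ C) :
    dSet x C ≤ dist x c := by
  rw [dSet, dif_pos ⟨c, hc⟩]
  exact Finset.inf'_le _ hc

lemma exists_mem_dSet_eq_dist (x : Pt d) {C : Finset (Pt d)} (hC : C.Nonempty) :
    ∃ c ∈ C, dSet x C = dist x c := by
  rw [dSet, dif_pos hC]
  exact Finset.exists_mem_eq_inf' hC _

lemma dSet_le_dist_add_dSet (x y : Pt d) {C : Finset (Pt d)} (hC : C.Nonempty) :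
    dSet x C ≤ dist x y + dSet y C := by
  obtain ⟨c, hc, hyc⟩ := exists_mem_dSet_eq_dist y hC
  calc dSet x C ≤ dist x c := dSet_le_dist x hc
    _ ≤ dist x y + dist y c := dist_triangle x y c
    _ = dist x y + dSet y C := by rw [hyc]

lemma sq_dSet_le (x y : Pt d) {C : Finset (Pt d)} (hC : C.Nonempty) :
    dSet x C ^ 2 ≤ 2 * (dist x y ^ 2 + dSet y C ^ 2) :=
  (pow_le_pow_left₀ (dSet_nonneg x C) (dSet_le_dist_add_dSet x y hC) 2).trans add_sq_le

lemma kcost_nonneg (X : Multiset (Pt d)) (C : Finset (Pt d)) : 0 ≤ kcost X C :=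
  Multiset.sum_nonneg fun _ h => by
    obtain ⟨y, -, rfl⟩ := Multiset.mem_map.1 h
    positivity

lemma optCost_le_kcost {K : ℕ} (X : Multiset (Pt d)) {C : Finset (Pt d)} (hC : C.Nonempty)
    (hCK : C.card ≤ K) : optCost K X ≤ kcost X C :=
  csInf_le ⟨0, by rintro _ ⟨D, -, -, rfl⟩; exact kcost_nonneg X D⟩ ⟨C, hC, hCK, rfl⟩

lemma sum_sq_dSet_le_kcost {P X : Finset (Pt d)} (hPX : P ⊆ X) (C : Finset (Pt d)) :
    ∑ y ∈ P, dSet y C ^ 2 ≤ kcost X.val C :=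
  Finset.sum_le_sum_of_subset_of_nonneg hPX fun _ _ _ => sq_nonneg _

lemma sum_sq_dist_cluster_le_kcost {X C : Finset (Pt d)} {f : Pt d → Pt d}
    (hf : ∀ y ∈ X, dist y (f y) = dSet y C) (c : Pt d) :
    ∑ y ∈ X.filter (fun y => f y = c), dist y c ^ 2 ≤ kcost X.val C := by
  calc ∑ y ∈ X.filter (fun y => f y = c), dist y c ^ 2
      = ∑ y ∈ X.filter (fun y => f y = c), dSet y C ^ 2 := by
        refine Finset.sum_congr rfl fun y hy => ?_
        obtain ⟨hyX, rfl⟩ := Finset.mem_filter.1 hy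
        rw [hf y hyX]
    _ ≤ kcost X.val C := sum_sq_dSet_le_kcost (Finset.filter_subset _ _) C

lemma card_mul_sq_dSet_le (P : Finset (Pt d)) (a x : Pt d) {C : Finset (Pt d)}
    (hC : C.Nonempty) :
    (P.card : ℝ) * dSet x C ^ 2 ≤
      2 * (dist x a ^ 2 * P.card) + 4 * ∑ y ∈ P, dist y a ^ 2 + 4 * ∑ y ∈ P, dSet y C ^ 2 := by
  have haC : (P.card : ℝ) * dSet a C ^ 2 ≤
      2 * ∑ y ∈ P, dist y a ^ 2 + 2 * ∑ y ∈ P, dSet y C ^ 2 := by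
    calc (P.card : ℝ) * dSet a C ^ 2 = ∑ _y ∈ P, dSet a C ^ 2 := by
          rw [Finset.sum_const, nsmul_eq_mul]
      _ ≤ ∑ y ∈ P, 2 * (dist y a ^ 2 + dSet y C ^ 2) := Finset.sum_le_sum fun y _ => by
          simpa only [dist_comm a y] using sq_dSet_le a y hC
      _ = 2 * ∑ y ∈ P, dist y a ^ 2 + 2 * ∑ y ∈ P, dSet y C ^ 2 := by
          rw [← mul_add, ← Finset.sum_add_distrib, Finset.mul_sum]
  have hxC := mul_le_mul_of_nonneg_left (sq_dSet_le x a hC) (Nat.cast_nonneg P.card)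
  linarith

theorem adversarial_sampling_bound_general {d K : ℕ} (hK : 1 ≤ K)
    (X : Finset (Pt d)) (ε1 ε2 : ℝ) (hε1 : 0 < ε1) (hε2 : 1 ≤ ε2)
    (Cstar : Finset (Pt d))
    (hCopt : kcost X.val Cstar = optCost K X.val)
    (astar : Pt d → Pt d)
    (hastar : ∀ y ∈ X, astar y ∈ Cstar ∧ dist y (astar y) = dSet y Cstar)
    (x : Pt d)
    (hout : dist x (astar x) ^ 2 * ((X.filter fun y => astar y = astar x).card : ℝ)
      ≤ ε2 * ∑ y ∈ X.filter (fun y => astar y = astar x), dist y (astar x) ^ 2)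
    (hP1 : (X.card : ℝ) / (K * ε1) ≤ ((X.filter fun y => astar y = astar x).card : ℝ)) :
    ∀ C : Finset (Pt d), C.Nonempty → C.card ≤ K →
      (X.card : ℝ) * dSet x C ^ 2 ≤ 20 * K * ε1 * ε2 * kcost X.val C := by
  intro C hC hCK
  set P := X.filter fun y => astar y = astar x
  set φ := kcost X.val C
  have hSa : ∑ y ∈ P, dist y (astar x) ^ 2 ≤ φ :=
    calc _ ≤ kcost X.val Cstar := sum_sq_dist_cluster_le_kcost (fun y hy => (hastar y hy).2) _
      _ = optCost K X.val := hCopt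
      _ ≤ φ := optCost_le_kcost X.val hC hCK
  have hSc : ∑ y ∈ P, dSet y C ^ 2 ≤ φ := sum_sq_dSet_le_kcost (Finset.filter_subset _ _) C
  have hφ : 0 ≤ φ := kcost_nonneg _ _
  have hxa : dist x (astar x) ^ 2 * P.card ≤ ε2 * φ :=
    hout.trans (mul_le_mul_of_nonneg_left hSa (by linarith))
  have hPx : (P.card : ℝ) * dSet x C ^ 2 ≤ 10 * ε2 * φ :=
    calc (P.card : ℝ) * dSet x C ^ 2 ≤ 2 * (dist x (astar x) ^ 2 * P.card)
          + 4 * ∑ y ∈ P, dist y (astar x) ^ 2 + 4 * ∑ y ∈ P, dSet y C ^ 2 :=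
          card_mul_sq_dSet_le P (astar x) x hC
      _ ≤ 2 * (ε2 * φ) + 4 * φ + 4 * φ := by linarith
      _ ≤ 10 * ε2 * φ := by nlinarith
  have hKε1 : 0 < (K : ℝ) * ε1 := mul_pos (by exact_mod_cast hK) hε1
  have hn : (X.card : ℝ) ≤ K * ε1 * P.card := by
    rw [div_le_iff₀ hKε1] at hP1
    linarith
  calc (X.card : ℝ) * dSet x C ^ 2 ≤ K * ε1 * P.card * dSet x C ^ 2 :=
        mul_le_mul_of_nonneg_right hn (sq_nonneg _)
    _ = K * ε1 * (P.card * dSet x C ^ 2) := by ring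
    _ ≤ K * ε1 * (10 * ε2 * φ) := mul_le_mul_of_nonneg_left hPx hKε1.le
    _ ≤ 20 * K * ε1 * ε2 * φ := by nlinarith [mul_nonneg (mul_nonneg hKε1.le (by linarith : (0 : ℝ) ≤ ε2)) hφ]

/-- adversarial sampling-probability bound.  If `x ∈ X` is not an
`ε2`-outlier and its optimal cluster `P_x` satisfies `|P_x| ≥ 2` and `|P_x| ≥ n/(K ε1)`,
then for every nonempty finite `C` with `|C| ≤ K`,
`n · d(x,C)² ≤ 20 K ε1 ε2 · φ(X;C)`. -/
theorem adversarial_sampling_bound {d K : ℕ} (hK : 1 ≤ K)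
    (X : Finset (Pt d)) (ε1 ε2 : ℝ) (hε1 : 0 < ε1) (hε2 : 1 ≤ ε2)
    (Cstar : Finset (Pt d)) (hCne : Cstar.Nonempty) (hCcard : Cstar.card ≤ K)
    (hCopt : kcost X.val Cstar = optCost K X.val)
    (astar : Pt d → Pt d)
    (hastar : ∀ y ∈ X, astar y ∈ Cstar ∧ dist y (astar y) = dSet y Cstar)
    (x : Pt d) (hx : x ∈ X)
    (hout : dist x (astar x) ^ 2 * ((X.filter fun y => astar y = astar x).card : ℝ)
      ≤ ε2 * ∑ y ∈ X.filter (fun y => astar y = astar x), dist y (astar x) ^ 2)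
    (hP2 : 2 ≤ (X.filter fun y => astar y = astar x).card)
    (hP1 : (X.card : ℝ) / (K * ε1) ≤ ((X.filter fun y => astar y = astar x).card : ℝ)) :
    ∀ C : Finset (Pt d), C.Nonempty → C.card ≤ K →
      (X.card : ℝ) * dSet x C ^ 2 ≤ 20 * K * ε1 * ε2 * kcost X.val C :=
  adversarial_sampling_bound_general hK X ε1 ε2 hε1 hε2 Cstar hCopt astar hastar x hout hP1
end
end

section
/- Uniqueness of SCMA decoding: let p be a prime and let N, m be positive integers with N < p; identify each index j ∈ {1,…,N} with the corresponding element of the field F_p = Z/pZ (these elements are pairwise distinct and nonzero). Suppose q, q' : {1,…,N} → F_p each have at most m nonzero values, and Σ_{j=1}^N q_j·j^{i−1} = Σ_{j=1}^N q'_j·j^{i−1} holds in F_p for every i ∈ {1,…,2m}. Then q = q'. In other words, a vector of length N over F_p with at most m nonzero entries is uniquely determined by its first 2m power sums Σ_j q_j·j^{i−1}. -/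
open scoped BigOperators Classical

/-!
The difference `d = q - q'` has at most `2m` nonzero entries and its first `2m` power sums
vanish, so `∑ⱼ dⱼ g(xⱼ) = 0` for every polynomial `g` of degree `< 2m`. Taking for `g` the
Lagrange basis polynomial of a node `j₀` over the support of `d` (degree `#supp d - 1 < 2m`)
isolates `d j₀`, which therefore vanishes.
-/

open Finset Polynomial

theorem Finset.sum_mul_eval_eq_zero_of_sum_mul_pow_eq_zero {R ι : Type*} [CommSemiring R]
    (s : Finset ι) {x d : ι → R} {n : ℕ} (h : ∀ i < n, ∑ j ∈ s, d j * x j ^ i = 0)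
    {g : R[X]} (hg : g.natDegree < n) : ∑ j ∈ s, d j * g.eval (x j) = 0 := by
  calc ∑ j ∈ s, d j * g.eval (x j)
      = ∑ j ∈ s, ∑ i ∈ range n, g.coeff i * (d j * x j ^ i) := by
        refine sum_congr rfl fun j _ => ?_
        rw [eval_eq_sum_range' hg, mul_sum]
        exact sum_congr rfl fun i _ => by ring
    _ = ∑ i ∈ range n, g.coeff i * ∑ j ∈ s, d j * x j ^ i := by
        rw [sum_comm]
        simp only [mul_sum]
    _ = 0 := sum_eq_zero fun i hi => by rw [h i (mem_range.mp hi), mul_zero]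

theorem eq_zero_of_card_support_le_of_sum_mul_pow_eq_zero {K ι : Type*} [Field K] [DecidableEq K] [Fintype ι]
    {x : ι → K} (hx : Function.Injective x) {d : ι → K} {n : ℕ}
    (hd : #{j | d j ≠ 0} ≤ n) (h : ∀ i < n, ∑ j, d j * x j ^ i = 0) : d = 0 := by
  set S : Finset ι := {j | d j ≠ 0}
  funext j₀
  by_contra hj₀
  have hj₀S : j₀ ∈ S := mem_filter.mpr ⟨mem_univ _, hj₀⟩
  have hinj : Set.InjOn x S := hx.injOn
  have hdeg : (Lagrange.basis S x j₀).natDegree < n := by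
    rw [Lagrange.natDegree_basis hinj hj₀S]
    have := card_pos.mpr ⟨j₀, hj₀S⟩
    omega
  have hisolate : ∑ j, d j * (Lagrange.basis S x j₀).eval (x j) = d j₀ := by
    rw [sum_eq_single j₀, Lagrange.eval_basis_self hinj hj₀S, mul_one]
    · intro j _ hj
      by_cases hjS : j ∈ S
      · rw [Lagrange.eval_basis_of_ne (Ne.symm hj) hjS, mul_zero]
      · rw [not_ne_iff.mp fun hdj => hjS (mem_filter.mpr ⟨mem_univ _, hdj⟩), zero_mul]
    · exact fun h => absurd (mem_univ j₀) h
  exact hj₀ (hisolate ▸ univ.sum_mul_eval_eq_zero_of_sum_mul_pow_eq_zero h hdeg)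

theorem Finset.card_filter_sub_ne_zero_le {ι G : Type*} [Fintype ι] [AddGroup G] [DecidableEq G] (f g : ι → G) :
    #{j | f j - g j ≠ 0} ≤ #{j | f j ≠ 0} + #{j | g j ≠ 0} := by
  refine (card_le_card fun j hj => ?_).trans (card_union_le _ _)
  simp only [mem_filter, mem_univ, true_and, mem_union] at hj ⊢
  contrapose! hj
  rw [hj.1, hj.2, sub_zero]

theorem Fin.natCast_succ_injective {N n : ℕ} (hN : N < n) :
    Function.Injective fun j : Fin N => (((j : ℕ) + 1 : ℕ) : ZMod n) := by
  intro a b hab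
  have hmod := (ZMod.natCast_eq_natCast_iff' _ _ _).mp hab
  rw [Nat.mod_eq_of_lt (by omega), Nat.mod_eq_of_lt (by omega)] at hmod
  exact Fin.ext (Nat.succ_injective hmod)

theorem scma_decoding_unique_general (p N m : ℕ) (hp : p.Prime)
    (hNp : N < p) (q q' : Fin N → ZMod p)
    (hq : (Finset.univ.filter fun j => q j ≠ 0).card ≤ m)
    (hq' : (Finset.univ.filter fun j => q' j ≠ 0).card ≤ m)
    (h : ∀ i < 2 * m,
      ∑ j : Fin N, q j * (((j : ℕ) + 1 : ℕ) : ZMod p) ^ i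
        = ∑ j : Fin N, q' j * (((j : ℕ) + 1 : ℕ) : ZMod p) ^ i) :
    q = q' := by
  have : Fact p.Prime := ⟨hp⟩
  have hcard : #{j | (q - q') j ≠ 0} ≤ 2 * m :=
    (card_filter_sub_ne_zero_le q q').trans ((add_le_add hq hq').trans_eq (two_mul m).symm)
  have hsyn : ∀ i < 2 * m, ∑ j, (q - q') j * (((j : ℕ) + 1 : ℕ) : ZMod p) ^ i = 0 := by
    intro i hi
    simp only [Pi.sub_apply, sub_mul, sum_sub_distrib, h i hi, sub_self]
  exact sub_eq_zero.mp
    (eq_zero_of_card_support_le_of_sum_mul_pow_eq_zero (Fin.natCast_succ_injective hNp) hcard hsyn)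

/-- uniqueness of SCMA decoding.  Let `p` be prime and `N < p`;
identify each index `j ∈ {1, …, N}` with the corresponding nonzero element of `F_p`.
A vector of length `N` over `F_p` with at most `m` nonzero entries is uniquely determined
by its first `2m` power sums `Σ_j q_j · j^{i−1}`, `i ∈ {1, …, 2m}`. -/
theorem scma_decoding_unique (p N m : ℕ) (hp : p.Prime) (hN : 0 < N) (hm : 0 < m)
    (hNp : N < p) (q q' : Fin N → ZMod p)
    (hq : (Finset.univ.filter fun j => q j ≠ 0).card ≤ m)
    (hq' : (Finset.univ.filter fun j => q' j ≠ 0).card ≤ m)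
    (h : ∀ i < 2 * m,
      ∑ j : Fin N, q j * (((j : ℕ) + 1 : ℕ) : ZMod p) ^ i
        = ∑ j : Fin N, q' j * (((j : ℕ) + 1 : ℕ) : ZMod p) ^ i) :
    q = q' :=
  scma_decoding_unique_general p N m hp hNp q q' hq hq' h
end
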